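/- Let F be a convex subset of the set of channels C(H,K), and let N, Ñ ∈ ri F. Then the zero-error quantum capacity satisfies Q_0(N) = Q_0(Ñ); likewise C_0(N) = C_0(Ñ) and C_{0EA}(N) = C_{0EA}(Ñ). In particular each of these zero-error capacity functions is constant on the relative interior of any face of C(H,K). -/

import Mathlib

/-
If `N` lies in the relative interior of `F` and `N' ∈ F`, then `N = (1 - μ) M + μ N'` with `M ∈ F`
and `0 < μ < 1`, so `N - μ N'` is completely positive. Expanding in Kraus operators,
`N^{⊗l} - μ^l N'^{⊗l}` is completely positive as well. In each of the three kinds of zero-error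
code, success means that some effect `0 ≤ D ≤ 1` accepts a state `ρ` of trace one with certainty
after it went through `N^{⊗l}` (for quantum codes `D = |x⟩⟨x|` after decoding). Splitting
`N^{⊗l}(ρ) = μ^l N'^{⊗l}(ρ) + (positive remainder)`, neither part can lose weight under `D`, so
`D` accepts `N'^{⊗l}(ρ)` with certainty too. Hence `N` and `N'` have the same zero-error codes
for every block length, and the capacities coincide.
-/

open scoped ComplexOrder

/-- A density operator: positive semidefinite with trace one. -/
def IsState {γ : Type*} [Fintype γ] [DecidableEq γ] (ρ : Matrix γ γ ℂ) : Prop :=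
  ρ.PosSemidef ∧ ρ.trace = 1

/-- Kraus characterization of quantum channels (CPTP maps). -/
def IsCPTP {ι κ : Type*} [Fintype ι] [DecidableEq ι] [Fintype κ] [DecidableEq κ]
    (N : Matrix ι ι ℂ →ₗ[ℂ] Matrix κ κ ℂ) : Prop :=
  ∃ (m : ℕ) (G : Fin m → Matrix κ ι ℂ),
    (∀ a, N a = ∑ j, G j * a * (G j).conjTranspose) ∧
      (∑ j, (G j).conjTranspose * G j = 1)

/-- The elementary tensor `a₁ ⊗ ⋯ ⊗ a_l` of matrices. -/
def elemTensor {ι : Type*} {l : ℕ} (a : Fin l → Matrix ι ι ℂ) :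
    Matrix (Fin l → ι) (Fin l → ι) ℂ :=
  Matrix.of fun x y => ∏ i, a i (x i) (y i)

/-- `Tl` is the `l`-th tensor power `N^{⊗l}` of the superoperator `N` (characterized
by its action on elementary tensors). -/
def IsTensorPow {ι κ : Type*} [Fintype ι] [Fintype κ] (l : ℕ)
    (N : Matrix ι ι ℂ →ₗ[ℂ] Matrix κ κ ℂ)
    (Tl : Matrix (Fin l → ι) (Fin l → ι) ℂ →ₗ[ℂ] Matrix (Fin l → κ) (Fin l → κ) ℂ) :
    Prop :=
  ∀ a : Fin l → Matrix ι ι ℂ, Tl (elemTensor a) = elemTensor fun i => N (a i)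

/-- `Λ ⊗ id`, applied on the first tensor factor of a bipartite operator. -/
def appLeft {F F' G : Type*} (Λ : Matrix F F ℂ →ₗ[ℂ] Matrix G G ℂ)
    (σ : Matrix (F × F') (F × F') ℂ) : Matrix (G × F') (G × F') ℂ :=
  Matrix.of fun p q => Λ (Matrix.of fun f g => σ (f, p.2) (g, q.2)) p.1 q.1

/-- The maximally entangled state vector on `ℂᵏ ⊗ ℂᵏ`. -/
noncomputable def maxEntVec (k : ℕ) : Fin k × Fin k → ℂ :=
  fun p => if p.1 = p.2 then ((1 / Real.sqrt k : ℝ) : ℂ) else 0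

/-- The rank-one projection `|x⟩⟨x|`. -/
noncomputable def rankOneProj {k : ℕ} (x : EuclideanSpace ℂ (Fin k)) :
    Matrix (Fin k) (Fin k) ℂ :=
  Matrix.of fun i j => x i * (starRingEnd ℂ) (x j)

variable {ι κ : Type*} [Fintype ι] [DecidableEq ι] [Fintype κ] [DecidableEq κ]

/-- `k(l,N)`: the maximal dimension of an `(l,k)` zero-error quantum code for `N`. -/
noncomputable def kQuantum (l : ℕ) (N : Matrix ι ι ℂ →ₗ[ℂ] Matrix κ κ ℂ) : ℕ :=
  sSup {k : ℕ | 0 < k ∧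
    ∃ (Tl : Matrix (Fin l → ι) (Fin l → ι) ℂ →ₗ[ℂ] Matrix (Fin l → κ) (Fin l → κ) ℂ)
      (P : Matrix (Fin k) (Fin k) ℂ →ₗ[ℂ] Matrix (Fin l → ι) (Fin l → ι) ℂ)
      (R : Matrix (Fin l → κ) (Fin l → κ) ℂ →ₗ[ℂ] Matrix (Fin k) (Fin k) ℂ),
      IsTensorPow l N Tl ∧ IsCPTP P ∧ IsCPTP R ∧
      ∀ x : EuclideanSpace ℂ (Fin k), ‖x‖ = 1 →
        ∑ i, ∑ j, (starRingEnd ℂ) (x i) * (R (Tl (P (rankOneProj x)))) i j * x j = 1}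

/-- `M(l,N)`: the maximal size of an `(l,M)` zero-error classical code for `N`. -/
noncomputable def mClassical (l : ℕ) (N : Matrix ι ι ℂ →ₗ[ℂ] Matrix κ κ ℂ) : ℕ :=
  sSup {M : ℕ | 0 < M ∧
    ∃ (Tl : Matrix (Fin l → ι) (Fin l → ι) ℂ →ₗ[ℂ] Matrix (Fin l → κ) (Fin l → κ) ℂ)
      (ρ : Fin M → Matrix (Fin l → ι) (Fin l → ι) ℂ)
      (D : Fin M → Matrix (Fin l → κ) (Fin l → κ) ℂ),
      IsTensorPow l N Tl ∧ (∀ m, IsState (ρ m)) ∧ (∀ m, (D m).PosSemidef) ∧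
      (∑ m, D m = 1) ∧ ∀ m, (Tl (ρ m) * D m).trace = 1}

/-- `M_EA(l,N)`: the maximal size of an `(l,M)` zero-error entanglement-assisted
code for `N`. -/
noncomputable def mEA (l : ℕ) (N : Matrix ι ι ℂ →ₗ[ℂ] Matrix κ κ ℂ) : ℕ :=
  sSup {M : ℕ | 0 < M ∧
    ∃ (nF nF' : ℕ)
      (Tl : Matrix (Fin l → ι) (Fin l → ι) ℂ →ₗ[ℂ] Matrix (Fin l → κ) (Fin l → κ) ℂ)
      (σ : Matrix (Fin nF × Fin nF') (Fin nF × Fin nF') ℂ)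
      (P : Fin M → (Matrix (Fin nF) (Fin nF) ℂ →ₗ[ℂ] Matrix (Fin l → ι) (Fin l → ι) ℂ))
      (D : Fin M → Matrix ((Fin l → κ) × Fin nF') ((Fin l → κ) × Fin nF') ℂ),
      IsTensorPow l N Tl ∧ IsState σ ∧ (∀ m, IsCPTP (P m)) ∧
      (∀ m, (D m).PosSemidef) ∧ (∑ m, D m = 1) ∧
      ∀ m, (appLeft (Tl ∘ₗ P m) σ * D m).trace = 1}

/-- The zero-error quantum capacity `Q₀(N) = lim (1/l) log k(l,N)`. -/
noncomputable def Q0 (N : Matrix ι ι ℂ →ₗ[ℂ] Matrix κ κ ℂ) : ℝ :=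
  Filter.limsup (fun l : ℕ => Real.logb 2 (kQuantum l N) / l) Filter.atTop

/-- The classical zero-error capacity `C₀(N) = lim (1/l) log M(l,N)`. -/
noncomputable def C0 (N : Matrix ι ι ℂ →ₗ[ℂ] Matrix κ κ ℂ) : ℝ :=
  Filter.limsup (fun l : ℕ => Real.logb 2 (mClassical l N) / l) Filter.atTop

/-- The entanglement-assisted zero-error capacity `C₀EA(N) = lim (1/l) log M_EA(l,N)`. -/
noncomputable def C0EA (N : Matrix ι ι ℂ →ₗ[ℂ] Matrix κ κ ℂ) : ℝ :=
  Filter.limsup (fun l : ℕ => Real.logb 2 (mEA l N) / l) Filter.atTop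

/-- The algebraic relative interior of a set `s` in a complex vector space: `x ∈ s`
such that every segment from a point of `s` to `x` can be prolonged beyond `x`
within `s`.  For convex sets in finite dimension this is the relative interior. -/
def AlgRelInterior {V : Type*} [AddCommGroup V] [Module ℂ V] (s : Set V) (x : V) :
    Prop :=
  x ∈ s ∧ ∀ y ∈ s, ∃ t : ℝ, 1 < t ∧ y + ((t : ℝ) : ℂ) • (x - y) ∈ s

open scoped Kronecker
open Matrix

section Kraus

variable {n m p : Type*} [Fintype n]

noncomputable def krausMap {J : Type*} [Fintype J] (V : J → Matrix m n ℂ) :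
    Matrix n n ℂ →ₗ[ℂ] Matrix m m ℂ where
  toFun a := ∑ j, V j * a * (V j)ᴴ
  map_add' a b := by simp only [Matrix.mul_add, Matrix.add_mul, Finset.sum_add_distrib]
  map_smul' c a := by
    simp only [RingHom.id_apply, Finset.smul_sum, Matrix.mul_smul, Matrix.smul_mul]

lemma krausMap_apply {J : Type*} [Fintype J] (V : J → Matrix m n ℂ) (a : Matrix n n ℂ) :
    krausMap V a = ∑ j, V j * a * (V j)ᴴ :=
  rfl

def IsCP (T : Matrix n n ℂ →ₗ[ℂ] Matrix m m ℂ) : Prop :=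
  ∃ (J : Type) (_ : Fintype J) (V : J → Matrix m n ℂ), T = krausMap V

def IsTP [Fintype m] (T : Matrix n n ℂ →ₗ[ℂ] Matrix m m ℂ) : Prop :=
  ∀ a, (T a).trace = a.trace

lemma trace_krausMap [Fintype m] {J : Type*} [Fintype J] (V : J → Matrix m n ℂ)
    (a : Matrix n n ℂ) :
    (krausMap V a).trace = ((∑ j, (V j)ᴴ * V j) * a).trace := by
  simp only [krausMap_apply, Matrix.trace_sum, Finset.sum_mul]
  exact Finset.sum_congr rfl fun j _ => by rw [Matrix.trace_mul_cycle, Matrix.mul_assoc]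

lemma isTP_krausMap [Fintype m] [DecidableEq n] {J : Type*} [Fintype J]
    {V : J → Matrix m n ℂ} (hV : ∑ j, (V j)ᴴ * V j = 1) : IsTP (krausMap V) := fun a => by
  rw [trace_krausMap, hV, Matrix.one_mul]

lemma IsCPTP.isCP [Fintype m] [DecidableEq n] [DecidableEq m]
    {T : Matrix n n ℂ →ₗ[ℂ] Matrix m m ℂ} (hT : IsCPTP T) : IsCP T := by
  obtain ⟨k, V, hV, -⟩ := hT
  exact ⟨Fin k, inferInstance, V, LinearMap.ext hV⟩

lemma IsCPTP.isTP [Fintype m] [DecidableEq n] [DecidableEq m]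
    {T : Matrix n n ℂ →ₗ[ℂ] Matrix m m ℂ} (hT : IsCPTP T) : IsTP T := by
  obtain ⟨k, V, hV, hV1⟩ := hT
  rw [show T = krausMap V from LinearMap.ext hV]
  exact isTP_krausMap hV1

lemma IsTP.comp [Fintype m] [Fintype p] {S : Matrix m m ℂ →ₗ[ℂ] Matrix p p ℂ}
    {T : Matrix n n ℂ →ₗ[ℂ] Matrix m m ℂ} (hS : IsTP S) (hT : IsTP T) : IsTP (S ∘ₗ T) :=
  fun a => (hS (T a)).trans (hT a)

lemma IsCP.posSemidef [Fintype m] {T : Matrix n n ℂ →ₗ[ℂ] Matrix m m ℂ} (hT : IsCP T)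
    {a : Matrix n n ℂ} (ha : a.PosSemidef) : (T a).PosSemidef := by
  obtain ⟨J, _, V, rfl⟩ := hT
  exact Matrix.posSemidef_sum _ fun j _ => ha.mul_mul_conjTranspose_same (V j)

lemma IsCP.comp [Fintype m] {S : Matrix m m ℂ →ₗ[ℂ] Matrix p p ℂ}
    {T : Matrix n n ℂ →ₗ[ℂ] Matrix m m ℂ} (hS : IsCP S) (hT : IsCP T) : IsCP (S ∘ₗ T) := by
  obtain ⟨J, _, V, rfl⟩ := hS
  obtain ⟨K, _, W, rfl⟩ := hT
  refine ⟨J × K, inferInstance, fun jk => V jk.1 * W jk.2, LinearMap.ext fun a => ?_⟩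
  simp only [LinearMap.comp_apply, krausMap_apply, Fintype.sum_prod_type, Matrix.mul_sum,
    Matrix.sum_mul, Matrix.conjTranspose_mul, Matrix.mul_assoc]

lemma IsCP.sub_smul_comp [Fintype p] {T T' : Matrix n n ℂ →ₗ[ℂ] Matrix m m ℂ}
    {P : Matrix p p ℂ →ₗ[ℂ] Matrix n n ℂ} {c : ℂ} (hS : IsCP (T - c • T')) (hP : IsCP P) :
    IsCP (T ∘ₗ P - c • (T' ∘ₗ P)) := by
  simpa only [LinearMap.sub_comp, LinearMap.smul_comp] using hS.comp hP

lemma IsCP.comp_sub_smul [Fintype m] {T T' : Matrix n n ℂ →ₗ[ℂ] Matrix m m ℂ}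
    {R : Matrix m m ℂ →ₗ[ℂ] Matrix p p ℂ} {c : ℂ} (hR : IsCP R) (hS : IsCP (T - c • T')) :
    IsCP (R ∘ₗ T - c • (R ∘ₗ T')) := by
  simpa only [LinearMap.comp_sub, LinearMap.comp_smul] using hR.comp hS

lemma krausMap_smul {J : Type*} [Fintype J] {c : ℝ} (hc : 0 ≤ c) (V : J → Matrix m n ℂ) :
    krausMap (fun j => ((Real.sqrt c : ℝ) : ℂ) • V j) = (c : ℂ) • krausMap V := by
  ext1 a
  have hsq : star ((Real.sqrt c : ℝ) : ℂ) * ((Real.sqrt c : ℝ) : ℂ) = c := by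
    rw [Complex.star_def, Complex.conj_ofReal, ← Complex.ofReal_mul, Real.mul_self_sqrt hc]
  simp only [krausMap_apply, LinearMap.smul_apply, Finset.smul_sum, Matrix.conjTranspose_smul,
    Matrix.smul_mul, Matrix.mul_smul, smul_smul, hsq]

lemma IsCP.smul {T : Matrix n n ℂ →ₗ[ℂ] Matrix m m ℂ} (hT : IsCP T) {c : ℝ} (hc : 0 ≤ c) :
    IsCP ((c : ℂ) • T) := by
  obtain ⟨J, _, V, rfl⟩ := hT
  exact ⟨J, inferInstance, _, (krausMap_smul hc V).symm⟩

lemma krausMap_sumElim {J K : Type*} [Fintype J] [Fintype K] (V : J → Matrix m n ℂ)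
    (W : K → Matrix m n ℂ) : krausMap (Sum.elim V W) = krausMap V + krausMap W := by
  ext1 a
  simp only [krausMap_apply, LinearMap.add_apply, Fintype.sum_sum_type, Sum.elim_inl,
    Sum.elim_inr]

lemma isCP_krausMap_sub_comp {J K : Type} [Fintype J] [Fintype K] (V : J → Matrix m n ℂ)
    {e : K → J} (he : Function.Injective e) : IsCP (krausMap V - krausMap (V ∘ e)) := by
  classical
  refine ⟨{j // j ∉ Set.range e}, inferInstance, fun j => V j, ?_⟩
  ext1 a
  simp only [LinearMap.sub_apply, krausMap_apply, Function.comp_apply, sub_eq_iff_eq_add]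
  rw [← Fintype.sum_subtype_add_sum_subtype (· ∈ Set.range e) fun j => V j * a * (V j)ᴴ,
    add_comm]
  congr 1
  convert ((Equiv.ofInjective e he).sum_comp fun j => V j * a * (V j)ᴴ).symm using 3 <;> rfl

end Kraus

section TensorPow

variable {l : ℕ}

/-- `elemTensor` for rectangular matrices. -/
def kronPi {α β : Type*} (A : Fin l → Matrix α β ℂ) : Matrix (Fin l → α) (Fin l → β) ℂ :=
  Matrix.of fun p q => ∏ i, A i (p i) (q i)

lemma kronPi_mul {α β γ : Type*} [Fintype β] (A : Fin l → Matrix α β ℂ)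
    (B : Fin l → Matrix β γ ℂ) : kronPi A * kronPi B = kronPi fun i => A i * B i := by
  ext p q
  simp only [kronPi, Matrix.mul_apply, Matrix.of_apply, Finset.prod_univ_sum,
    Fintype.piFinset_univ, Finset.prod_mul_distrib]

lemma kronPi_conjTranspose {α β : Type*} (A : Fin l → Matrix α β ℂ) :
    (kronPi A)ᴴ = kronPi fun i => (A i)ᴴ := by
  ext p q
  simp [kronPi, Matrix.conjTranspose_apply]

lemma kronPi_smul {α β : Type*} (c : ℂ) (A : Fin l → Matrix α β ℂ) :
    kronPi (fun i => c • A i) = c ^ l • kronPi A := by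
  ext p q
  simp [kronPi, Finset.prod_mul_distrib]

lemma kronPi_sum {α β J : Type*} [Fintype J] (A : Fin l → J → Matrix α β ℂ) :
    kronPi (fun i => ∑ j, A i j) = ∑ w : Fin l → J, kronPi fun i => A i (w i) := by
  ext p q
  simp only [kronPi, Matrix.of_apply, Matrix.sum_apply, Finset.prod_univ_sum,
    Fintype.piFinset_univ]

lemma kronPi_single {α : Type*} [DecidableEq α] (p q : Fin l → α) :
    kronPi (fun i => Matrix.single (p i) (q i) (1 : ℂ)) = Matrix.single p q 1 := by
  ext x y
  simp only [kronPi, Matrix.of_apply, Matrix.single_apply, funext_iff]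
  by_cases h : ∀ i, p i = x i ∧ q i = y i
  · simp [h]
  · push Not at h
    obtain ⟨i, hi⟩ := h
    rw [Finset.prod_eq_zero (Finset.mem_univ i) (if_neg fun h => hi h.1 h.2), if_neg]
    exact fun h => hi (h.1 i) (h.2 i)

lemma trace_elemTensor {α : Type*} [Fintype α] (a : Fin l → Matrix α α ℂ) :
    (elemTensor a).trace = ∏ i, (a i).trace := by
  simp only [Matrix.trace, elemTensor, Matrix.diag_apply, Matrix.of_apply,
    Finset.prod_univ_sum, Fintype.piFinset_univ]

variable {ι κ : Type*} [Fintype ι] [Fintype κ]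

lemma linearMap_ext_elemTensor [DecidableEq ι] {β : Type*} [AddCommMonoid β] [Module ℂ β]
    {f g : Matrix (Fin l → ι) (Fin l → ι) ℂ →ₗ[ℂ] β}
    (h : ∀ a, f (elemTensor a) = g (elemTensor a)) : f = g := by
  refine Matrix.ext_linearMap ℂ fun p q => LinearMap.ext_ring ?_
  have hpq := h fun i => Matrix.single (p i) (q i) 1
  rw [show elemTensor _ = _ from kronPi_single p q] at hpq
  simpa using hpq

lemma IsTensorPow.unique [DecidableEq ι] {N : Matrix ι ι ℂ →ₗ[ℂ] Matrix κ κ ℂ}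
    {T T' : Matrix (Fin l → ι) (Fin l → ι) ℂ →ₗ[ℂ] Matrix (Fin l → κ) (Fin l → κ) ℂ}
    (hT : IsTensorPow l N T) (hT' : IsTensorPow l N T') : T = T' :=
  linearMap_ext_elemTensor fun a => (hT a).trans (hT' a).symm

lemma IsTensorPow.isTP [DecidableEq ι] {N : Matrix ι ι ℂ →ₗ[ℂ] Matrix κ κ ℂ} (hN : IsTP N)
    {T : Matrix (Fin l → ι) (Fin l → ι) ℂ →ₗ[ℂ] Matrix (Fin l → κ) (Fin l → κ) ℂ}
    (hT : IsTensorPow l N T) : IsTP T := by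
  have : Matrix.traceLinearMap _ ℂ ℂ ∘ₗ T = Matrix.traceLinearMap _ ℂ ℂ :=
    linearMap_ext_elemTensor fun a => by
      simp only [LinearMap.comp_apply, Matrix.traceLinearMap_apply, hT a, trace_elemTensor]
      exact Finset.prod_congr rfl fun i _ => hN (a i)
  exact fun a => LinearMap.congr_fun this a

lemma IsTensorPow.smul {N : Matrix ι ι ℂ →ₗ[ℂ] Matrix κ κ ℂ}
    {T : Matrix (Fin l → ι) (Fin l → ι) ℂ →ₗ[ℂ] Matrix (Fin l → κ) (Fin l → κ) ℂ}
    (hT : IsTensorPow l N T) (c : ℂ) : IsTensorPow l (c • N) (c ^ l • T) := fun a => by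
  simp only [LinearMap.smul_apply, hT a]
  exact (kronPi_smul c _).symm

def krausPow {J : Type*} (l : ℕ) (V : J → Matrix κ ι ℂ) (w : Fin l → J) :
    Matrix (Fin l → κ) (Fin l → ι) ℂ :=
  kronPi fun i => V (w i)

lemma isTensorPow_krausMap_krausPow {J : Type*} [Fintype J] (V : J → Matrix κ ι ℂ) :
    IsTensorPow l (krausMap V) (krausMap (krausPow l V)) := fun a => by
  change krausMap (krausPow l V) (kronPi a) = kronPi fun i => krausMap V (a i)
  simp only [krausMap_apply, krausPow, kronPi_conjTranspose, kronPi_mul]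
  exact (kronPi_sum fun i j => V j * a i * (V j)ᴴ).symm

lemma IsCP.exists_isTensorPow {N : Matrix ι ι ℂ →ₗ[ℂ] Matrix κ κ ℂ} (hN : IsCP N) (l : ℕ) :
    ∃ T, IsTensorPow l N T ∧ IsCP T := by
  obtain ⟨J, _, V, rfl⟩ := hN
  exact ⟨_, isTensorPow_krausMap_krausPow V, _, inferInstance, _, rfl⟩

/-- `(A + B)^{⊗l} - B^{⊗l}` collects the Kraus operators of `(A + B)^{⊗l}` in which at least one
factor comes from `A`. -/
lemma IsTensorPow.isCP_sub [DecidableEq ι] {A B : Matrix ι ι ℂ →ₗ[ℂ] Matrix κ κ ℂ}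
    (hA : IsCP A) (hB : IsCP B)
    {T T' : Matrix (Fin l → ι) (Fin l → ι) ℂ →ₗ[ℂ] Matrix (Fin l → κ) (Fin l → κ) ℂ}
    (hT : IsTensorPow l (A + B) T) (hT' : IsTensorPow l B T') : IsCP (T - T') := by
  obtain ⟨J, _, V, rfl⟩ := hA
  obtain ⟨K, _, W, rfl⟩ := hB
  rw [← krausMap_sumElim] at hT
  rw [hT.unique (isTensorPow_krausMap_krausPow _),
    hT'.unique (isTensorPow_krausMap_krausPow _)]
  have he : Function.Injective fun (w : Fin l → K) i => (Sum.inr (w i) : J ⊕ K) :=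
    fun w w' h => funext fun i => Sum.inr_injective (congrFun h i)
  have hcomp : krausPow l (Sum.elim V W) ∘ (fun w i => Sum.inr (w i)) = krausPow l W := rfl
  simpa only [hcomp] using isCP_krausMap_sub_comp (krausPow l (Sum.elim V W)) he

lemma IsTensorPow.isCP_sub_smul [DecidableEq ι] {N N' : Matrix ι ι ℂ →ₗ[ℂ] Matrix κ κ ℂ}
    {μ : ℝ} (hμ : 0 ≤ μ) (hdom : IsCP (N - (μ : ℂ) • N')) (hN' : IsCP N')
    {T T' : Matrix (Fin l → ι) (Fin l → ι) ℂ →ₗ[ℂ] Matrix (Fin l → κ) (Fin l → κ) ℂ}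
    (hT : IsTensorPow l N T) (hT' : IsTensorPow l N' T') :
    IsCP (T - ((μ ^ l : ℝ) : ℂ) • T') := by
  rw [← sub_add_cancel N ((μ : ℂ) • N')] at hT
  push_cast
  exact hT.isCP_sub hdom (hN'.smul hμ) (hT'.smul _)

end TensorPow

section AppLeft

variable {F G C : Type*}

lemma appLeft_add (Λ₁ Λ₂ : Matrix F F ℂ →ₗ[ℂ] Matrix G G ℂ) (σ : Matrix (F × C) (F × C) ℂ) :
    appLeft (Λ₁ + Λ₂) σ = appLeft Λ₁ σ + appLeft Λ₂ σ := by
  ext p q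
  simp [appLeft]

lemma appLeft_smul (c : ℂ) (Λ : Matrix F F ℂ →ₗ[ℂ] Matrix G G ℂ)
    (σ : Matrix (F × C) (F × C) ℂ) : appLeft (c • Λ) σ = c • appLeft Λ σ := by
  ext p q
  simp [appLeft]

lemma appLeft_krausMap [Fintype F] [Fintype C] [DecidableEq C] {J : Type*} [Fintype J]
    (V : J → Matrix G F ℂ) (σ : Matrix (F × C) (F × C) ℂ) :
    appLeft (krausMap V) σ = krausMap (fun j => V j ⊗ₖ (1 : Matrix C C ℂ)) σ := by
  ext p q
  simp [appLeft, krausMap_apply, Matrix.sum_apply, Matrix.mul_apply,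
    Matrix.conjTranspose_apply, Matrix.one_apply, Fintype.sum_prod_type, Finset.sum_mul,
    apply_ite (starRingEnd ℂ)]

lemma IsCP.posSemidef_appLeft [Fintype F] [Fintype G] [Fintype C] [DecidableEq C]
    {Λ : Matrix F F ℂ →ₗ[ℂ] Matrix G G ℂ} (hΛ : IsCP Λ) {σ : Matrix (F × C) (F × C) ℂ}
    (hσ : σ.PosSemidef) : (appLeft Λ σ).PosSemidef := by
  obtain ⟨J, _, V, rfl⟩ := hΛ
  rw [appLeft_krausMap]
  exact IsCP.posSemidef ⟨J, inferInstance, _, rfl⟩ hσ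

lemma IsTP.trace_appLeft [Fintype F] [Fintype G] [Fintype C]
    {Λ : Matrix F F ℂ →ₗ[ℂ] Matrix G G ℂ} (hΛ : IsTP Λ) (σ : Matrix (F × C) (F × C) ℂ) :
    (appLeft Λ σ).trace = σ.trace := by
  rw [Matrix.trace, Fintype.sum_prod_type_right, Matrix.trace, Fintype.sum_prod_type_right]
  exact Finset.sum_congr rfl fun c _ => hΛ (Matrix.of fun f g => σ (f, c) (g, c))

end AppLeft

section Effects

variable {n : Type*} [DecidableEq n]

lemma Matrix.PosSemidef.trace_mul_nonneg [Fintype n] {A B : Matrix n n ℂ} (hA : A.PosSemidef)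
    (hB : B.PosSemidef) : 0 ≤ (A * B).trace := by
  open scoped MatrixOrder in
  obtain ⟨C, rfl⟩ := CStarAlgebra.nonneg_iff_eq_star_mul_self.mp hB.nonneg
  rw [star_eq_conjTranspose, ← Matrix.mul_assoc, Matrix.trace_mul_cycle]
  exact (hA.mul_mul_conjTranspose_same C).trace_nonneg

lemma Matrix.PosSemidef.trace_mul_le [Fintype n] {A D : Matrix n n ℂ} (hA : A.PosSemidef)
    (hD : (1 - D).PosSemidef) : (A * D).trace ≤ A.trace := by
  simpa [Matrix.mul_sub, Matrix.trace_sub] using hA.trace_mul_nonneg hD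

/-- Since `D ≤ 1`, neither `c • Y` nor `Z` can lose weight under `D`. -/
lemma trace_mul_eq_trace_of_eq_smul_add [Fintype n] {X Y Z D : Matrix n n ℂ} {c : ℝ}
    (hc : 0 < c) (hX : X = (c : ℂ) • Y + Z) (hY : Y.PosSemidef) (hZ : Z.PosSemidef)
    (hD : (1 - D).PosSemidef) (h : (X * D).trace = X.trace) : (Y * D).trace = Y.trace := by
  have hYD := sub_nonneg.mpr (hY.trace_mul_le hD)
  have hZD := sub_nonneg.mpr (hZ.trace_mul_le hD)
  have hc' : (0 : ℂ) < c := Complex.zero_lt_real.mpr hc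
  have hsum : (c : ℂ) * (Y.trace - (Y * D).trace) + (Z.trace - (Z * D).trace) = 0 := by
    subst hX
    simp only [Matrix.add_mul, Matrix.smul_mul, Matrix.trace_add, Matrix.trace_smul,
      smul_eq_mul] at h
    linear_combination -h
  have hYzero := ((add_eq_zero_iff_of_nonneg (mul_nonneg hc'.le hYD) hZD).mp hsum).1
  exact (sub_eq_zero.mp ((mul_eq_zero.mp hYzero).resolve_left hc'.ne')).symm

lemma posSemidef_one_sub_of_sum_eq_one {M : Type*} [Fintype M]
    [DecidableEq M] {D : M → Matrix n n ℂ} (hD : ∀ m, (D m).PosSemidef) (hsum : ∑ m, D m = 1)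
    (m : M) : (1 - D m).PosSemidef := by
  rw [← hsum, ← Finset.add_sum_erase _ _ (Finset.mem_univ m), add_sub_cancel_left]
  exact Matrix.posSemidef_sum _ fun m' _ => hD m'

end Effects

section RankOne

variable {k : ℕ} {x : EuclideanSpace ℂ (Fin k)}

lemma rankOneProj_eq_vecMulVec (x : EuclideanSpace ℂ (Fin k)) :
    rankOneProj x = vecMulVec (WithLp.ofLp x) (star (WithLp.ofLp x)) :=
  rfl

lemma dotProduct_star_eq_one (hx : ‖x‖ = 1) : WithLp.ofLp x ⬝ᵥ star (WithLp.ofLp x) = 1 := by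
  rw [← EuclideanSpace.inner_eq_star_dotProduct, inner_self_eq_norm_sq_to_K, hx]
  norm_num

lemma trace_rankOneProj (hx : ‖x‖ = 1) : (rankOneProj x).trace = 1 := by
  rw [rankOneProj_eq_vecMulVec, trace_vecMulVec, dotProduct_star_eq_one hx]

lemma posSemidef_rankOneProj (x : EuclideanSpace ℂ (Fin k)) : (rankOneProj x).PosSemidef :=
  Matrix.posSemidef_vecMulVec_self_star _

lemma posSemidef_one_sub_rankOneProj (hx : ‖x‖ = 1) : (1 - rankOneProj x).PosSemidef := by
  have hP : (rankOneProj x)ᴴ = rankOneProj x := by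
    ext i j
    simp [rankOneProj, mul_comm]
  have hPP : rankOneProj x * rankOneProj x = rankOneProj x := by
    rw [rankOneProj_eq_vecMulVec, vecMulVec_mul_vecMulVec, dotProduct_comm,
      dotProduct_star_eq_one hx, one_smul]
  have hQ : (1 - rankOneProj x)ᴴ * (1 - rankOneProj x) = 1 - rankOneProj x := by
    simp only [Matrix.conjTranspose_sub, Matrix.conjTranspose_one, hP, Matrix.mul_sub,
      Matrix.sub_mul, Matrix.one_mul, Matrix.mul_one, hPP, sub_self, sub_zero]
  exact hQ ▸ Matrix.posSemidef_conjTranspose_mul_self (1 - rankOneProj x)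

lemma sum_conj_mul_apply_mul_eq_trace (x : EuclideanSpace ℂ (Fin k))
    (σ : Matrix (Fin k) (Fin k) ℂ) :
    ∑ i, ∑ j, starRingEnd ℂ (x i) * σ i j * x j = (σ * rankOneProj x).trace := by
  simp only [Matrix.trace, Matrix.diag_apply, Matrix.mul_apply, rankOneProj, Matrix.of_apply]
  exact Finset.sum_congr rfl fun i _ => Finset.sum_congr rfl fun j _ => by ring

end RankOne

section Transfer

variable {F G C : Type*} [Fintype F] [DecidableEq F] [Fintype G] [DecidableEq G] [Fintype C]
  [DecidableEq C] {Λ Λ' : Matrix F F ℂ →ₗ[ℂ] Matrix G G ℂ} {c : ℝ}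

lemma trace_apply_mul_eq_one (hc : 0 < c) (hS : IsCP (Λ - (c : ℂ) • Λ')) (hΛ : IsTP Λ)
    (hΛ'cp : IsCP Λ') (hΛ'tp : IsTP Λ') {ρ : Matrix F F ℂ} (hρ : IsState ρ)
    {D : Matrix G G ℂ} (hD : (1 - D).PosSemidef) (h : (Λ ρ * D).trace = 1) :
    (Λ' ρ * D).trace = 1 := by
  have key := trace_mul_eq_trace_of_eq_smul_add hc (X := Λ ρ) (Z := (Λ - (c : ℂ) • Λ') ρ)
    (by simp) (hΛ'cp.posSemidef hρ.1) (hS.posSemidef hρ.1) hD (by rw [h, hΛ, hρ.2])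
  rwa [hΛ'tp, hρ.2] at key

lemma trace_appLeft_mul_eq_one (hc : 0 < c) (hS : IsCP (Λ - (c : ℂ) • Λ')) (hΛ : IsTP Λ)
    (hΛ'cp : IsCP Λ') (hΛ'tp : IsTP Λ') {σ : Matrix (F × C) (F × C) ℂ} (hσ : IsState σ)
    {D : Matrix (G × C) (G × C) ℂ} (hD : (1 - D).PosSemidef)
    (h : (appLeft Λ σ * D).trace = 1) : (appLeft Λ' σ * D).trace = 1 := by
  have hsplit : appLeft Λ σ = (c : ℂ) • appLeft Λ' σ + appLeft (Λ - (c : ℂ) • Λ') σ := by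
    rw [← appLeft_smul, ← appLeft_add, add_sub_cancel]
  have key := trace_mul_eq_trace_of_eq_smul_add hc hsplit (hΛ'cp.posSemidef_appLeft hσ.1)
    (hS.posSemidef_appLeft hσ.1) hD (by rw [h, hΛ.trace_appLeft, hσ.2])
  rwa [hΛ'tp.trace_appLeft, hσ.2] at key

end Transfer

lemma AlgRelInterior.exists_eq_smul_add {V : Type*} [AddCommGroup V] [Module ℂ V] {s : Set V}
    {x y : V} (hx : AlgRelInterior s x) (hy : y ∈ s) :
    ∃ μ : ℝ, 0 < μ ∧ μ < 1 ∧ ∃ z ∈ s, x = ((1 - μ : ℝ) : ℂ) • z + (μ : ℂ) • y := by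
  obtain ⟨t, ht, hz⟩ := hx.2 y hy
  have ht0 : (t : ℂ) ≠ 0 := Complex.ofReal_ne_zero.mpr (by linarith)
  refine ⟨1 - t⁻¹, by simp [inv_lt_one_of_one_lt₀ ht], by simp [zero_lt_one.trans ht],
    _, hz, ?_⟩
  rw [smul_add, smul_smul]
  push_cast
  rw [sub_sub_cancel, inv_mul_cancel₀ ht0, one_smul]
  module

section Codes

variable {N N' : Matrix ι ι ℂ →ₗ[ℂ] Matrix κ κ ℂ} {l : ℕ}

def HasQuantumCode (l : ℕ) (N : Matrix ι ι ℂ →ₗ[ℂ] Matrix κ κ ℂ) (k : ℕ) : Prop :=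
  ∃ (Tl : Matrix (Fin l → ι) (Fin l → ι) ℂ →ₗ[ℂ] Matrix (Fin l → κ) (Fin l → κ) ℂ)
    (P : Matrix (Fin k) (Fin k) ℂ →ₗ[ℂ] Matrix (Fin l → ι) (Fin l → ι) ℂ)
    (R : Matrix (Fin l → κ) (Fin l → κ) ℂ →ₗ[ℂ] Matrix (Fin k) (Fin k) ℂ),
    IsTensorPow l N Tl ∧ IsCPTP P ∧ IsCPTP R ∧
    ∀ x : EuclideanSpace ℂ (Fin k), ‖x‖ = 1 →
      ∑ i, ∑ j, (starRingEnd ℂ) (x i) * (R (Tl (P (rankOneProj x)))) i j * x j = 1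

def HasClassicalCode (l : ℕ) (N : Matrix ι ι ℂ →ₗ[ℂ] Matrix κ κ ℂ) (M : ℕ) : Prop :=
  ∃ (Tl : Matrix (Fin l → ι) (Fin l → ι) ℂ →ₗ[ℂ] Matrix (Fin l → κ) (Fin l → κ) ℂ)
    (ρ : Fin M → Matrix (Fin l → ι) (Fin l → ι) ℂ)
    (D : Fin M → Matrix (Fin l → κ) (Fin l → κ) ℂ),
    IsTensorPow l N Tl ∧ (∀ m, IsState (ρ m)) ∧ (∀ m, (D m).PosSemidef) ∧
    (∑ m, D m = 1) ∧ ∀ m, (Tl (ρ m) * D m).trace = 1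

def HasEACode (l : ℕ) (N : Matrix ι ι ℂ →ₗ[ℂ] Matrix κ κ ℂ) (M : ℕ) : Prop :=
  ∃ (nF nF' : ℕ)
    (Tl : Matrix (Fin l → ι) (Fin l → ι) ℂ →ₗ[ℂ] Matrix (Fin l → κ) (Fin l → κ) ℂ)
    (σ : Matrix (Fin nF × Fin nF') (Fin nF × Fin nF') ℂ)
    (P : Fin M → (Matrix (Fin nF) (Fin nF) ℂ →ₗ[ℂ] Matrix (Fin l → ι) (Fin l → ι) ℂ))
    (D : Fin M → Matrix ((Fin l → κ) × Fin nF') ((Fin l → κ) × Fin nF') ℂ),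
    IsTensorPow l N Tl ∧ IsState σ ∧ (∀ m, IsCPTP (P m)) ∧
    (∀ m, (D m).PosSemidef) ∧ (∑ m, D m = 1) ∧
    ∀ m, (appLeft (Tl ∘ₗ P m) σ * D m).trace = 1

lemma Q0_congr (h : ∀ l k, HasQuantumCode l N k ↔ HasQuantumCode l N' k) : Q0 N = Q0 N' := by
  have hk (l : ℕ) : kQuantum l N = kQuantum l N' :=
    congrArg sSup (Set.ext fun k => and_congr_right' (h l k))
  simp only [Q0, hk]

lemma C0_congr (h : ∀ l M, HasClassicalCode l N M ↔ HasClassicalCode l N' M) :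
    C0 N = C0 N' := by
  have hM (l : ℕ) : mClassical l N = mClassical l N' :=
    congrArg sSup (Set.ext fun M => and_congr_right' (h l M))
  simp only [C0, hM]

lemma C0EA_congr (h : ∀ l M, HasEACode l N M ↔ HasEACode l N' M) : C0EA N = C0EA N' := by
  have hM (l : ℕ) : mEA l N = mEA l N' :=
    congrArg sSup (Set.ext fun M => and_congr_right' (h l M))
  simp only [C0EA, hM]

variable {μ : ℝ}

lemma IsTensorPow.exists_isTensorPow_isCP_sub_smul (hN' : IsCPTP N') (hμ : 0 ≤ μ)
    (hdom : IsCP (N - (μ : ℂ) • N'))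
    {T : Matrix (Fin l → ι) (Fin l → ι) ℂ →ₗ[ℂ] Matrix (Fin l → κ) (Fin l → κ) ℂ}
    (hT : IsTensorPow l N T) :
    ∃ T', IsTensorPow l N' T' ∧ IsCP T' ∧ IsTP T' ∧ IsCP (T - ((μ ^ l : ℝ) : ℂ) • T') := by
  obtain ⟨T', hT', hT'cp⟩ := hN'.isCP.exists_isTensorPow l
  exact ⟨T', hT', hT'cp, hT'.isTP hN'.isTP, hT.isCP_sub_smul hμ hdom hN'.isCP hT'⟩

lemma HasQuantumCode.of_isCP_sub_smul (hN : IsCPTP N) (hN' : IsCPTP N') (hμ : 0 < μ)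
    (hdom : IsCP (N - (μ : ℂ) • N')) {k : ℕ} (h : HasQuantumCode l N k) :
    HasQuantumCode l N' k := by
  obtain ⟨T, P, R, hT, hP, hR, hcode⟩ := h
  obtain ⟨T', hT', hT'cp, hT'tp, hS⟩ := hT.exists_isTensorPow_isCP_sub_smul hN' hμ.le hdom
  refine ⟨T', P, R, hT', hP, hR, fun x hx => ?_⟩
  have hx' := hcode x hx
  rw [sum_conj_mul_apply_mul_eq_trace] at hx' ⊢
  exact trace_apply_mul_eq_one (Λ := R ∘ₗ T ∘ₗ P) (pow_pos hμ l)
    (hR.isCP.comp_sub_smul (hS.sub_smul_comp hP.isCP))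
    (hR.isTP.comp ((hT.isTP hN.isTP).comp hP.isTP))
    (hR.isCP.comp (hT'cp.comp hP.isCP)) (hR.isTP.comp (hT'tp.comp hP.isTP))
    ⟨posSemidef_rankOneProj x, trace_rankOneProj hx⟩ (posSemidef_one_sub_rankOneProj hx) hx'

lemma HasClassicalCode.of_isCP_sub_smul (hN : IsCPTP N) (hN' : IsCPTP N') (hμ : 0 < μ)
    (hdom : IsCP (N - (μ : ℂ) • N')) {M : ℕ} (h : HasClassicalCode l N M) :
    HasClassicalCode l N' M := by
  obtain ⟨T, ρ, D, hT, hρ, hD, hDsum, hcode⟩ := h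
  obtain ⟨T', hT', hT'cp, hT'tp, hS⟩ := hT.exists_isTensorPow_isCP_sub_smul hN' hμ.le hdom
  exact ⟨T', ρ, D, hT', hρ, hD, hDsum, fun m => trace_apply_mul_eq_one (pow_pos hμ l) hS
    (hT.isTP hN.isTP) hT'cp hT'tp (hρ m) (posSemidef_one_sub_of_sum_eq_one hD hDsum m)
    (hcode m)⟩

lemma HasEACode.of_isCP_sub_smul (hN : IsCPTP N) (hN' : IsCPTP N') (hμ : 0 < μ)
    (hdom : IsCP (N - (μ : ℂ) • N')) {M : ℕ} (h : HasEACode l N M) : HasEACode l N' M := by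
  obtain ⟨nF, nF', T, σ, P, D, hT, hσ, hP, hD, hDsum, hcode⟩ := h
  obtain ⟨T', hT', hT'cp, hT'tp, hS⟩ := hT.exists_isTensorPow_isCP_sub_smul hN' hμ.le hdom
  refine ⟨nF, nF', T', σ, P, D, hT', hσ, hP, hD, hDsum, fun m => ?_⟩
  exact trace_appLeft_mul_eq_one (pow_pos hμ l) (hS.sub_smul_comp (hP m).isCP)
    ((hT.isTP hN.isTP).comp (hP m).isTP)
    (hT'cp.comp (hP m).isCP) (hT'tp.comp (hP m).isTP) hσ
    (posSemidef_one_sub_of_sum_eq_one hD hDsum m) (hcode m)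

lemma AlgRelInterior.exists_isCP_sub_smul {F : Set (Matrix ι ι ℂ →ₗ[ℂ] Matrix κ κ ℂ)}
    (hFchan : F ⊆ {T | IsCPTP T}) (hN : AlgRelInterior F N) (hN' : N' ∈ F) :
    ∃ μ : ℝ, 0 < μ ∧ IsCP (N - (μ : ℂ) • N') := by
  obtain ⟨μ, hμ0, hμ1, M, hM, rfl⟩ := hN.exists_eq_smul_add hN'
  refine ⟨μ, hμ0, ?_⟩
  rw [add_sub_cancel_right]
  exact (hFchan hM).isCP.smul (by linarith)

end Codes

theorem stmt_12_general (F : Set (Matrix ι ι ℂ →ₗ[ℂ] Matrix κ κ ℂ))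
    (hFchan : F ⊆ {T : Matrix ι ι ℂ →ₗ[ℂ] Matrix κ κ ℂ | IsCPTP T})
    (N N' : Matrix ι ι ℂ →ₗ[ℂ] Matrix κ κ ℂ)
    (hN : AlgRelInterior F N) (hN' : AlgRelInterior F N') :
    Q0 N = Q0 N' ∧ C0 N = C0 N' ∧ C0EA N = C0EA N' := by
  obtain ⟨μ, hμ, hdom⟩ := hN.exists_isCP_sub_smul hFchan hN'.1
  obtain ⟨ν, hν, hdom'⟩ := hN'.exists_isCP_sub_smul hFchan hN.1
  have hNc : IsCPTP N := hFchan hN.1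
  have hN'c : IsCPTP N' := hFchan hN'.1
  exact ⟨Q0_congr fun _ _ => ⟨.of_isCP_sub_smul hNc hN'c hμ hdom,
      .of_isCP_sub_smul hN'c hNc hν hdom'⟩,
    C0_congr fun _ _ => ⟨.of_isCP_sub_smul hNc hN'c hμ hdom,
      .of_isCP_sub_smul hN'c hNc hν hdom'⟩,
    C0EA_congr fun _ _ => ⟨.of_isCP_sub_smul hNc hN'c hμ hdom,
      .of_isCP_sub_smul hN'c hNc hν hdom'⟩⟩

/-- the zero-error capacities `Q₀`, `C₀` and `C₀EA` are constant on the
relative interior of any convex subset `F` of the set of channels (in particular on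
the relative interior of any face of `C(H,K)`). -/
theorem stmt_12 (F : Set (Matrix ι ι ℂ →ₗ[ℂ] Matrix κ κ ℂ))
    (hFchan : F ⊆ {T : Matrix ι ι ℂ →ₗ[ℂ] Matrix κ κ ℂ | IsCPTP T})
    (hFconv : ∀ x ∈ F, ∀ y ∈ F, ∀ t : ℝ, 0 ≤ t → t ≤ 1 →
      ((t : ℝ) : ℂ) • x + (((1 - t : ℝ)) : ℂ) • y ∈ F)
    (N N' : Matrix ι ι ℂ →ₗ[ℂ] Matrix κ κ ℂ)
    (hN : AlgRelInterior F N) (hN' : AlgRelInterior F N') :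
    Q0 N = Q0 N' ∧ C0 N = C0 N' ∧ C0EA N = C0EA N' :=
  stmt_12_general F hFchan N N' hN hN'
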